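/- Let Y be a topological space with the following property: for every compact C ⊆ Y there is a compact D ⊆ Y such that any two proper rays r, s : [0, ∞) → Y with r(0) = s(0) = v and images in Y ∖ D are properly homotopic relative to v by a proper homotopy with image in Y ∖ C. Then for every compact C ⊆ Y there is a compact D ⊆ Y such that for every compact E ⊆ Y and any two proper rays r, s with r(0) = s(0) = v and images in Y ∖ D, there exist parameters a, b ≥ 0 and a path α in Y ∖ E from r(a) to s(b) such that the concatenated loop r|[0,a] · α · (s|[0,b])⁻¹ is null-homotopic in Y ∖ C. -/
import Mathlib


/-- The loop `r|[0,a] · α · (s|[0,b])⁻¹` (parametrized on `[0,1]`): traverse `r` from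
`r 0` to `r a`, then the path `α` (parametrized on `[0,1]`), then `s` backwards from
`s b` to `s 0`.  Here the rays `r, s` have domain `[0,∞)`, modelled by `ℝ≥0`. -/
noncomputable def concatLoop {Y : Type*} (r s : NNReal → Y) (a b : NNReal)
    (α : ℝ → Y) : ℝ → Y := fun t =>
  if t ≤ 1 / 3 then r (a * Real.toNNReal (3 * t))
  else if t ≤ 2 / 3 then α (3 * t - 1)
  else s (b * Real.toNNReal (3 - 3 * t))

/-- A loop `γ` (parametrized on `[0,1]`) is null-homotopic in `S ⊆ Y` if it extends to a
continuous map of the disk with image in `S`, i.e. there is a continuous map of the square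
into `S` which restricts to `γ` on the bottom edge, is constant on the top edge, and agrees
on the two vertical edges. -/
def NullHomotopicIn {Y : Type*} [TopologicalSpace Y] (γ : ℝ → Y) (S : Set Y) : Prop :=
  ∃ H : ℝ × ℝ → Y,
    ContinuousOn H (Set.Icc 0 1 ×ˢ Set.Icc 0 1) ∧
    H '' (Set.Icc 0 1 ×ˢ Set.Icc 0 1) ⊆ S ∧
    (∀ t ∈ Set.Icc (0 : ℝ) 1, H (t, 0) = γ t) ∧
    (∀ t ∈ Set.Icc (0 : ℝ) 1, H (t, 1) = H (0, 1)) ∧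
    (∀ u ∈ Set.Icc (0 : ℝ) 1, H (0, u) = H (1, u))

/-- Suppose `Y` has the property that for every compact `C` there is a compact `D` such that
any two proper rays based at the same point `v` with images in `Y ∖ D` are properly homotopic
rel `v` in `Y ∖ C`.  Then for every compact `C` there is a compact `D` such that for every
compact `E` and any two proper rays `r, s` based at `v` with images in `Y ∖ D`, there are
parameters `a, b` and a path `α` in `Y ∖ E` from `r(a)` to `s(b)` such that the loop
`r|[0,a] · α · (s|[0,b])⁻¹` is null-homotopic in `Y ∖ C`.  (Proper rays have domain `[0,∞)`,
modelled by `ℝ≥0`.) -/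
theorem stmt14 {Y : Type*} [TopologicalSpace Y]
    (h : ∀ C : Set Y, IsCompact C → ∃ D : Set Y, IsCompact D ∧
      ∀ r s : NNReal → Y, IsProperMap r → IsProperMap s → r 0 = s 0 →
        Set.range r ⊆ Dᶜ → Set.range s ⊆ Dᶜ →
        ∃ H : NNReal × unitInterval → Y, IsProperMap H ∧
          Set.range H ⊆ Cᶜ ∧
          (∀ t, H (t, 0) = r t) ∧ (∀ t, H (t, 1) = s t) ∧
          (∀ u, H (0, u) = r 0)) :
    ∀ C : Set Y, IsCompact C → ∃ D : Set Y, IsCompact D ∧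
      ∀ E : Set Y, IsCompact E →
      ∀ r s : NNReal → Y, IsProperMap r → IsProperMap s → r 0 = s 0 →
        Set.range r ⊆ Dᶜ → Set.range s ⊆ Dᶜ →
        ∃ (a b : NNReal) (α : ℝ → Y),
          ContinuousOn α (Set.Icc 0 1) ∧ α '' Set.Icc 0 1 ⊆ Eᶜ ∧
          α 0 = r a ∧ α 1 = s b ∧
          NullHomotopicIn (concatLoop r s a b α) Cᶜ := by
  intro C hC
  obtain ⟨D, hD, hmain⟩ := h C hC
  refine ⟨D, hD, ?_⟩
  intro E hE r s hr hs hrs hrD hsD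
  obtain ⟨H, hH, hHC, hH0, hH1, hHv⟩ := hmain r s hr hs hrs hrD hsD
  -- choose T beyond the (compact) preimage of E
  have hK : IsCompact (Prod.fst '' (H ⁻¹' E)) :=
    (hH.isCompact_preimage hE).image continuous_fst
  obtain ⟨M, hM⟩ : BddAbove (Prod.fst '' (H ⁻¹' E)) := hK.bddAbove
  set T : NNReal := M + 1 with hT
  have hTE : ∀ u : unitInterval, H (T, u) ∉ E := by
    intro u hu
    have : T ∈ Prod.fst '' (H ⁻¹' E) := ⟨(T, u), hu, rfl⟩
    have := hM this
    exact absurd this (not_le.mpr (lt_add_of_pos_right M one_pos))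
  -- the connecting path
  set α : ℝ → Y := fun x => H (T, Set.projIcc 0 1 zero_le_one x) with hα
  have hαcont : Continuous α :=
    hH.continuous.comp (continuous_const.prodMk (continuous_projIcc))
  refine ⟨T, T, α, hαcont.continuousOn, ?_, ?_, ?_, ?_⟩
  · rintro y ⟨x, -, rfl⟩
    exact hTE _
  · have : Set.projIcc (0:ℝ) 1 zero_le_one 0 = 0 := by
      ext; simp [Set.coe_projIcc]
    simp [hα, this, hH0]
  · have : Set.projIcc (0:ℝ) 1 zero_le_one 1 = 1 := by
      ext; simp [Set.coe_projIcc]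
    simp [hα, this, hH1]
  -- the null-homotopy
  · set β₁ : ℝ → NNReal := fun t =>
      if t ≤ 1/3 then T * Real.toNNReal (3 * t)
      else if t ≤ 2/3 then T else T * Real.toNNReal (3 - 3 * t) with hβ₁
    set β₂ : ℝ → ℝ := fun t =>
      if t ≤ 1/3 then 0 else if t ≤ 2/3 then 3 * t - 1 else 1 with hβ₂
    have hβ₁cont : Continuous β₁ := by
      apply Continuous.if_le
      · exact continuous_const.mul (continuous_real_toNNReal.comp
          (continuous_const.mul continuous_id))
      · apply Continuous.if_le
        · exact continuous_const
        · exact continuous_const.mul (continuous_real_toNNReal.comp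
            (continuous_const.sub (continuous_const.mul continuous_id)))
        · exact continuous_id
        · exact continuous_const
        · intro x hx
          subst hx
          norm_num
      · exact continuous_id
      · exact continuous_const
      · intro x hx
        subst hx
        norm_num
    have hβ₂cont : Continuous β₂ := by
      apply Continuous.if_le
      · exact continuous_const
      · apply Continuous.if_le
        · exact (continuous_const.mul continuous_id).sub continuous_const
        · exact continuous_const
        · exact continuous_id
        · exact continuous_const
        · intro x hx; subst hx; norm_num
      · exact continuous_id
      · exact continuous_const
      · intro x hx; subst hx; norm_num
    set σ : ℝ → unitInterval := fun t => Set.projIcc 0 1 zero_le_one (β₂ t) with hσ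
    set G : ℝ × ℝ → Y := fun p =>
      H (Real.toNNReal (1 - p.2) * β₁ p.1, σ p.1) with hG
    have hGcont : Continuous G := by
      apply hH.continuous.comp
      apply Continuous.prodMk
      · exact ((continuous_real_toNNReal.comp
          (continuous_const.sub continuous_snd)).mul (hβ₁cont.comp continuous_fst))
      · exact continuous_projIcc.comp (hβ₂cont.comp continuous_fst)
    refine ⟨G, hGcont.continuousOn, ?_, ?_, ?_, ?_⟩
    · rintro y ⟨p, -, rfl⟩
      exact hHC ⟨_, rfl⟩
    · intro t ht
      have h10 : Real.toNNReal (1 - (0:ℝ)) = 1 := by norm_num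
      simp only [hG, h10, one_mul]
      unfold concatLoop
      rcases le_or_gt t (1/3) with h1 | h1
      · have hσt : σ t = 0 := by
          simp only [hσ, hβ₂, if_pos h1]
          ext; simp [Set.coe_projIcc]
        simp only [hβ₁, if_pos h1, hσt, hH0]
      · rcases le_or_gt t (2/3) with h2 | h2
        · have hσt : σ t = Set.projIcc 0 1 zero_le_one (3 * t - 1) := by
            simp only [hσ, hβ₂, if_neg (not_le.mpr h1), if_pos h2]
          simp only [hβ₁, if_neg (not_le.mpr h1), if_pos h2, hσt, hα]
        · have hσt : σ t = 1 := by
            simp only [hσ, hβ₂, if_neg (not_le.mpr h1), if_neg (not_le.mpr h2)]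
            ext; simp [Set.coe_projIcc]
          simp only [hβ₁, if_neg (not_le.mpr h1), if_neg (not_le.mpr h2), hσt, hH1]
    · intro t ht
      have h11 : Real.toNNReal (1 - (1:ℝ)) = 0 := by norm_num
      simp only [hG, h11, zero_mul, hHv]
    · intro u hu
      have hb0 : β₁ 0 = 0 := by
        simp only [hβ₁]
        norm_num
      have hb1 : β₁ 1 = 0 := by
        simp only [hβ₁]
        norm_num
      have hs0 : σ 0 = 0 := by
        simp only [hσ, hβ₂]
        norm_num
      have hs1 : σ 1 = 1 := by
        simp only [hσ, hβ₂]
        norm_num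
      simp only [hG, hb0, hb1, mul_zero, hs0, hs1, hHv]
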